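/- Finite-time practical consensus for the hybrid system: for any ε ∈ (0,1), along any solution z(t,j) the function V(y) = ½‖y‖² of y(t,j) = (I − 𝟙𝟙ᵀ/N)x(t,j) satisfies V(y(t,j)) ≤ e^{−2ελ₂(Sym(L))·t}·V(y(0,0)) whenever ‖y(s,·)‖ > (1/(1−ε))·(‖L‖/λ₂(Sym(L)))·(Δ/2)·√N for all earlier times; consequently there exists T(ε) ≥ 0 such that ‖x(t,j) − (𝟙𝟙ᵀ/N)x(0,0)‖ ≤ (1/(1−ε))·(‖L‖/λ₂(Sym(L)))·(Δ/2)·√N for all (t,j) in the domain with t ≥ T(ε). -/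

import Mathlib

/-!
On a flow interval the disagreement `y = x - mean x` moves with velocity `-L q`, and since `L`
kills constants, `⟨y, -L q⟩ = -⟨y, L y⟩ - ⟨y, L (q - x)⟩ ≤ -λ₂ ‖y‖² + ‖L‖ (Δ / 2) √N ‖y‖`:
the first term by the spectral gap of `Sym L` on `𝟙ᗮ`, the second because every quantization
error is below `Δ / 2`. Outside the ball of radius `B = ‖L‖ (Δ / 2) √N / ((1 - ε) λ₂)` this is at
most `-ε λ₂ ‖y‖²`, so `V = ½ ‖y‖²` decays at rate `2 ε λ₂` there, and the ball is forward
invariant. Jumps do not move `x`, so both facts pass along the hybrid time domain. Either the arc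
enters the ball and stays, or it never does, and then the exponential decay of `V` contradicts
`V > B² / 2` at large times.
-/

open Matrix

noncomputable def en {N : ℕ} (v : Fin N → ℝ) : ℝ := Real.sqrt (∑ i, v i ^ 2)

open Set Real

section EuclideanNorm

variable {N : ℕ}

lemma sum_sq_eq_dotProduct_self (v : Fin N → ℝ) : ∑ i, v i ^ 2 = v ⬝ᵥ v := by
  simp only [dotProduct, sq]

lemma en_eq_sqrt_dotProduct_self (v : Fin N → ℝ) : en v = √(v ⬝ᵥ v) := by
  rw [en, sum_sq_eq_dotProduct_self]

lemma en_nonneg (v : Fin N → ℝ) : 0 ≤ en v := Real.sqrt_nonneg _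

lemma en_sq (v : Fin N → ℝ) : en v ^ 2 = v ⬝ᵥ v := by
  rw [en, Real.sq_sqrt (by positivity), sum_sq_eq_dotProduct_self]

lemma en_le_iff_dotProduct_self_le {v : Fin N → ℝ} {B : ℝ} (hB : 0 ≤ B) :
    en v ≤ B ↔ v ⬝ᵥ v ≤ B ^ 2 := by
  rw [← en_sq, pow_le_pow_iff_left₀ (en_nonneg v) hB two_ne_zero]

lemma abs_dotProduct_le_en_mul_en (u v : Fin N → ℝ) : |u ⬝ᵥ v| ≤ en u * en v := by
  rw [en, en, ← Real.sqrt_mul (Finset.sum_nonneg fun i _ => sq_nonneg _), ← Real.sqrt_sq_eq_abs]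
  exact Real.sqrt_le_sqrt (Finset.sum_mul_sq_le_sq_mul_sq _ u v)

lemma en_le_sqrt_mul_of_abs_le {v : Fin N → ℝ} {r : ℝ} (hr : 0 ≤ r) (hv : ∀ i, |v i| ≤ r) :
    en v ≤ √N * r := by
  rw [en, ← Real.sqrt_sq hr, ← Real.sqrt_mul (Nat.cast_nonneg N)]
  refine Real.sqrt_le_sqrt ?_
  calc ∑ i, v i ^ 2 ≤ ∑ _i : Fin N, r ^ 2 :=
        Finset.sum_le_sum fun i _ => sq_le_sq' (abs_le.mp (hv i)).1 (abs_le.mp (hv i)).2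
    _ = N * r ^ 2 := by simp

end EuclideanNorm

section SymmetricPart

variable {n : Type*}

noncomputable def symmPart (M : Matrix n n ℝ) : Matrix n n ℝ := (1 / 2 : ℝ) • (M + Mᵀ)

lemma symmPart_isHermitian (M : Matrix n n ℝ) : (symmPart M).IsHermitian := by
  rw [isHermitian_iff_isSymm, IsSymm, symmPart, transpose_smul, transpose_add, transpose_transpose,
    add_comm]

variable [Fintype n]

lemma dotProduct_symmPart_mulVec (M : Matrix n n ℝ) (v : n → ℝ) :
    v ⬝ᵥ symmPart M *ᵥ v = v ⬝ᵥ M *ᵥ v := by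
  have htranspose : v ⬝ᵥ Mᵀ *ᵥ v = v ⬝ᵥ M *ᵥ v := by
    rw [dotProduct_mulVec, vecMul_transpose, dotProduct_comm]
  rw [symmPart, smul_mulVec, add_mulVec, dotProduct_smul, dotProduct_add, htranspose, smul_eq_mul]
  ring

/-- Expand `v` in an orthonormal eigenbasis of `S`: its components along the eigenvalue `0` vanish
because `v ⊥ ker S`, and every other eigenvalue is at least `lam`. -/
lemma Matrix.IsHermitian.mul_dotProduct_self_le [DecidableEq n] {S : Matrix n n ℝ}
    (hS : S.IsHermitian) {lam : ℝ}
    (hlam : lam ∈ lowerBounds {μ | μ ≠ 0 ∧ ∃ v, v ≠ 0 ∧ S *ᵥ v = μ • v}) {v : n → ℝ}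
    (hv : ∀ w, S *ᵥ w = 0 → w ⬝ᵥ v = 0) : lam * (v ⬝ᵥ v) ≤ v ⬝ᵥ S *ᵥ v := by
  set b := fun i => (hS.eigenvectorBasis i).ofLp
  have hparseval : ∀ u w : n → ℝ, ∑ i, (u ⬝ᵥ b i) * (b i ⬝ᵥ w) = u ⬝ᵥ w := by
    intro u w
    simpa [EuclideanSpace.inner_eq_star_dotProduct, dotProduct_comm] using
      hS.eigenvectorBasis.sum_inner_mul_inner (WithLp.toLp 2 u) (WithLp.toLp 2 w)
  have hSb : ∀ i, b i ⬝ᵥ S *ᵥ v = hS.eigenvalues i * (v ⬝ᵥ b i) := by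
    intro i
    have hbS : b i ᵥ* S = hS.eigenvalues i • b i := by
      conv_lhs => rw [← (isHermitian_iff_isSymm.mp hS).eq]
      rw [vecMul_transpose, hS.mulVec_eigenvectorBasis]
    rw [dotProduct_mulVec, hbS, smul_dotProduct, dotProduct_comm, smul_eq_mul]
  have hterm : ∀ i, lam * (v ⬝ᵥ b i) ^ 2 ≤ hS.eigenvalues i * (v ⬝ᵥ b i) ^ 2 := by
    intro i
    by_cases hμ : hS.eigenvalues i = 0
    · have : b i ⬝ᵥ v = 0 := hv _ (by rw [hS.mulVec_eigenvectorBasis, hμ, zero_smul])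
      simp [dotProduct_comm v, this]
    · have hb0 : b i ≠ 0 := by simpa [b] using hS.eigenvectorBasis.toBasis.ne_zero i
      exact mul_le_mul_of_nonneg_right
        (hlam ⟨hμ, _, hb0, hS.mulVec_eigenvectorBasis i⟩) (sq_nonneg _)
  calc lam * (v ⬝ᵥ v) = ∑ i, lam * (v ⬝ᵥ b i) ^ 2 := by
        simp_rw [← hparseval v v, Finset.mul_sum, dotProduct_comm (b _) v, sq]
    _ ≤ ∑ i, hS.eigenvalues i * (v ⬝ᵥ b i) ^ 2 := Finset.sum_le_sum fun i _ => hterm i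
    _ = v ⬝ᵥ S *ᵥ v := by
        rw [← hparseval]
        simp_rw [hSb]
        exact Finset.sum_congr rfl fun i _ => by ring

lemma pos_and_le_of_mulVec_symmPart_eq_smul {N : ℕ} {M : Matrix (Fin N) (Fin N) ℝ} {CL μ : ℝ}
    (hM : ∀ v, 0 ≤ v ⬝ᵥ M *ᵥ v) (hCL : ∀ v, en (M *ᵥ v) ≤ CL * en v) (hμ : μ ≠ 0)
    {v : Fin N → ℝ} (hv : v ≠ 0) (heig : symmPart M *ᵥ v = μ • v) : 0 < μ ∧ μ ≤ CL := by
  have hquad : v ⬝ᵥ M *ᵥ v = μ * (v ⬝ᵥ v) := by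
    rw [← dotProduct_symmPart_mulVec, heig, dotProduct_smul, smul_eq_mul]
  have hvv : 0 < v ⬝ᵥ v := by simpa using dotProduct_self_star_pos_iff.mpr hv
  refine ⟨lt_of_le_of_ne (nonneg_of_mul_nonneg_left (hquad ▸ hM v) hvv) hμ.symm, ?_⟩
  refine le_of_mul_le_mul_right ?_ hvv
  calc μ * (v ⬝ᵥ v) ≤ en v * en (M *ᵥ v) :=
        hquad ▸ (le_abs_self _).trans (abs_dotProduct_le_en_mul_en _ _)
    _ ≤ en v * (CL * en v) := mul_le_mul_of_nonneg_left (hCL v) (en_nonneg v)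
    _ = CL * (v ⬝ᵥ v) := by rw [← en_sq]; ring

end SymmetricPart

section Laplacian

variable {n : Type*} [Fintype n] [DecidableEq n]

def laplacian (A : Matrix n n ℝ) : Matrix n n ℝ := diagonal (fun i => ∑ j, A i j) - A

lemma laplacian_mulVec_apply (A : Matrix n n ℝ) (v : n → ℝ) (i : n) :
    (laplacian A *ᵥ v) i = ∑ j, A i j * (v i - v j) := by
  rw [laplacian, sub_mulVec, Pi.sub_apply, mulVec_diagonal]
  simp [mulVec, dotProduct, mul_sub, Finset.sum_mul]

lemma laplacian_mulVec_const (A : Matrix n n ℝ) (c : ℝ) : laplacian A *ᵥ (fun _ => c) = 0 := by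
  ext i
  simp [laplacian_mulVec_apply]

lemma sum_laplacian_mulVec {A : Matrix n n ℝ} (hbal : ∀ i, ∑ j, A i j = ∑ j, A j i)
    (v : n → ℝ) : ∑ i, (laplacian A *ᵥ v) i = 0 := by
  simp only [laplacian_mulVec_apply, mul_sub, Finset.sum_sub_distrib]
  rw [Finset.sum_comm (f := fun i j => A i j * v j)]
  simp only [← Finset.sum_mul, hbal, sub_self]

lemma dotProduct_laplacian_mulVec {A : Matrix n n ℝ} (hbal : ∀ i, ∑ j, A i j = ∑ j, A j i)
    (v : n → ℝ) : v ⬝ᵥ laplacian A *ᵥ v = (1 / 2) * ∑ i, ∑ j, A i j * (v i - v j) ^ 2 := by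
  have hswap : ∑ i, ∑ j, A i j * v j ^ 2 = ∑ i, ∑ j, A i j * v i ^ 2 := by
    rw [Finset.sum_comm]
    simp only [← Finset.sum_mul, hbal]
  have hsplit : ∀ i j, A i j * (v i - v j) ^ 2
      = 2 * (v i * (A i j * (v i - v j))) + (A i j * v j ^ 2 - A i j * v i ^ 2) := by
    intros; ring
  simp only [hsplit, Finset.sum_add_distrib, Finset.sum_sub_distrib, hswap, ← Finset.mul_sum,
    dotProduct, laplacian_mulVec_apply]
  ring

lemma dotProduct_laplacian_mulVec_nonneg {A : Matrix n n ℝ} (hA : ∀ i j, 0 ≤ A i j)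
    (hbal : ∀ i, ∑ j, A i j = ∑ j, A j i) (v : n → ℝ) : 0 ≤ v ⬝ᵥ laplacian A *ᵥ v := by
  rw [dotProduct_laplacian_mulVec hbal]
  exact mul_nonneg (by norm_num) (Finset.sum_nonneg fun i _ => Finset.sum_nonneg fun j _ =>
    mul_nonneg (hA i j) (sq_nonneg _))

lemma eq_of_dotProduct_laplacian_mulVec_eq_zero {A : Matrix n n ℝ} (hA : ∀ i j, 0 ≤ A i j)
    (hbal : ∀ i, ∑ j, A i j = ∑ j, A j i)
    (hconn : ∀ i j, Relation.ReflTransGen (fun a b => A a b ≠ 0 ∨ A b a ≠ 0) i j)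
    {v : n → ℝ} (hv : v ⬝ᵥ laplacian A *ᵥ v = 0) (i j : n) : v i = v j := by
  rw [dotProduct_laplacian_mulVec hbal, mul_eq_zero, or_iff_right (by norm_num),
    Finset.sum_eq_zero_iff_of_nonneg (fun i _ => Finset.sum_nonneg fun j _ =>
      mul_nonneg (hA i j) (sq_nonneg _))] at hv
  have hedge : ∀ a b, A a b ≠ 0 → v a = v b := by
    intro a b hab
    have := (Finset.sum_eq_zero_iff_of_nonneg (fun j _ => mul_nonneg (hA a j) (sq_nonneg _))).mp
      (hv a (Finset.mem_univ a)) b (Finset.mem_univ b)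
    rwa [mul_eq_zero, or_iff_right hab, sq_eq_zero_iff, sub_eq_zero] at this
  induction hconn i j with
  | refl => rfl
  | tail _ hbc ih => exact ih.trans (hbc.elim (hedge _ _) fun h => (hedge _ _ h).symm)

/-- The kernel of `symmPart (laplacian A)` consists of the constant vectors, which are orthogonal
to `v`. -/
lemma laplacian_spectral_gap {A : Matrix n n ℝ} (hA : ∀ i j, 0 ≤ A i j)
    (hbal : ∀ i, ∑ j, A i j = ∑ j, A j i)
    (hconn : ∀ i j, Relation.ReflTransGen (fun a b => A a b ≠ 0 ∨ A b a ≠ 0) i j) {lam : ℝ}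
    (hlam : lam ∈ lowerBounds
      {μ | μ ≠ 0 ∧ ∃ v, v ≠ 0 ∧ symmPart (laplacian A) *ᵥ v = μ • v})
    {v : n → ℝ} (hv : ∑ i, v i = 0) : lam * (v ⬝ᵥ v) ≤ v ⬝ᵥ laplacian A *ᵥ v := by
  rw [← dotProduct_symmPart_mulVec]
  refine (symmPart_isHermitian _).mul_dotProduct_self_le hlam fun u hu => ?_
  have hconst := eq_of_dotProduct_laplacian_mulVec_eq_zero hA hbal hconn
    (by rw [← dotProduct_symmPart_mulVec, hu, dotProduct_zero])
  rcases isEmpty_or_nonempty n with hn | ⟨⟨i₀⟩⟩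
  · simp [dotProduct]
  · simp [dotProduct, hconst _ i₀, ← Finset.mul_sum, hv]

end Laplacian

section Disagreement

variable {N : ℕ}

noncomputable def disagreement (v : Fin N → ℝ) : Fin N → ℝ := fun i => v i - (∑ m, v m) / N

lemma sum_disagreement (v : Fin N → ℝ) : ∑ i, disagreement v i = 0 := by
  rcases N.eq_zero_or_pos with rfl | hN
  · simp
  · simp only [disagreement, Finset.sum_sub_distrib, Finset.sum_const, Finset.card_univ,
      Fintype.card_fin, nsmul_eq_mul]
    field_simp
    ring

lemma disagreement_add_smul {w : Fin N → ℝ} (hw : ∑ i, w i = 0) (u : Fin N → ℝ) (c : ℝ) :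
    disagreement (u + c • w) = disagreement u + c • w := by
  ext i
  simp only [disagreement, Pi.add_apply, Pi.smul_apply, smul_eq_mul, Finset.sum_add_distrib,
    ← Finset.mul_sum, hw, mul_zero, add_zero]
  ring

lemma laplacian_mulVec_disagreement (A : Matrix (Fin N) (Fin N) ℝ) (v : Fin N → ℝ) :
    laplacian A *ᵥ disagreement v = laplacian A *ᵥ v := by
  rw [show disagreement v = v - fun _ => (∑ m, v m) / N from rfl, mulVec_sub,
    laplacian_mulVec_const, sub_zero]

lemma dotProduct_neg_mulVec_add_le {M : Matrix (Fin N) (Fin N) ℝ} {lam CL ρ B ε : ℝ}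
    (hlam : 0 ≤ lam) (hε : ε ≤ 1) (hCL0 : 0 ≤ CL) (hCL : ∀ v, en (M *ᵥ v) ≤ CL * en v)
    (hB : CL * ρ = (1 - ε) * lam * B) {y e : Fin N → ℝ}
    (hgap : lam * (y ⬝ᵥ y) ≤ y ⬝ᵥ M *ᵥ y) (he : en e ≤ ρ) (hy : B ≤ en y) :
    y ⬝ᵥ -(M *ᵥ (y + e)) ≤ -(ε * lam) * (y ⬝ᵥ y) := by
  have hcross : -(y ⬝ᵥ M *ᵥ e) ≤ (1 - ε) * lam * B * en y := calc
    -(y ⬝ᵥ M *ᵥ e) ≤ en y * en (M *ᵥ e) := (neg_le_abs _).trans (abs_dotProduct_le_en_mul_en _ _)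
    _ ≤ en y * (CL * ρ) := mul_le_mul_of_nonneg_left
      ((hCL e).trans (mul_le_mul_of_nonneg_left he hCL0)) (en_nonneg y)
    _ = (1 - ε) * lam * B * en y := by rw [hB]; ring
  have hthreshold : (1 - ε) * lam * B * en y ≤ (1 - ε) * lam * (y ⬝ᵥ y) := by
    rw [← en_sq, sq, ← mul_assoc]
    exact mul_le_mul_of_nonneg_right
      (mul_le_mul_of_nonneg_left hy (mul_nonneg (sub_nonneg.mpr hε) hlam)) (en_nonneg y)
  rw [mulVec_add, dotProduct_neg, dotProduct_add]
  linarith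

lemma disagreement_dotProduct_neg_laplacian_mulVec_le {A : Matrix (Fin N) (Fin N) ℝ}
    (hA : ∀ i j, 0 ≤ A i j) (hbal : ∀ i, ∑ j, A i j = ∑ j, A j i)
    (hconn : ∀ i j, Relation.ReflTransGen (fun a b => A a b ≠ 0 ∨ A b a ≠ 0) i j)
    {lam CL ε r : ℝ}
    (hlam : lam ∈ lowerBounds
      {μ | μ ≠ 0 ∧ ∃ v, v ≠ 0 ∧ symmPart (laplacian A) *ᵥ v = μ • v})
    (hlam_pos : 0 < lam) (hε : ε < 1) (hCL0 : 0 ≤ CL)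
    (hCL : ∀ v, en (laplacian A *ᵥ v) ≤ CL * en v) (hr : 0 ≤ r) {x q : Fin N → ℝ}
    (hxq : ∀ i, |x i - q i| ≤ r)
    (hfar : 1 / (1 - ε) * (CL / lam) * r * √N ≤ en (disagreement x)) :
    disagreement x ⬝ᵥ -(laplacian A *ᵥ q) ≤ -(ε * lam) * (disagreement x ⬝ᵥ disagreement x) := by
  have hq : laplacian A *ᵥ q = laplacian A *ᵥ (disagreement x + (q - x)) := by
    rw [mulVec_add, laplacian_mulVec_disagreement, ← mulVec_add, add_sub_cancel]
  rw [hq]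
  refine dotProduct_neg_mulVec_add_le hlam_pos.le hε.le hCL0 hCL (ρ := √N * r) ?_
    (laplacian_spectral_gap hA hbal hconn hlam (sum_disagreement x))
    (en_le_sqrt_mul_of_abs_le hr fun i => ?_) hfar
  · field_simp [(sub_pos.mpr hε).ne']
  · rw [Pi.sub_apply, abs_sub_comm]
    exact hxq i

end Disagreement

section AffineCurve

variable {n : Type*} [Fintype n]

lemma hasDerivAt_affine_dotProduct_self (u w : n → ℝ) (a s : ℝ) :
    HasDerivAt (fun t => (u + (t - a) • w) ⬝ᵥ (u + (t - a) • w))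
      (2 * ((u + (s - a) • w) ⬝ᵥ w)) s := by
  have hpoly : (fun t => (u + (t - a) • w) ⬝ᵥ (u + (t - a) • w))
      = fun t => u ⬝ᵥ u + 2 * (t - a) * (u ⬝ᵥ w) + (t - a) ^ 2 * (w ⬝ᵥ w) := by
    funext t
    simp only [add_dotProduct, dotProduct_add, smul_dotProduct, dotProduct_smul, smul_eq_mul,
      dotProduct_comm w u]
    ring
  rw [hpoly]
  have hs : HasDerivAt (fun t : ℝ => t - a) 1 s := (hasDerivAt_id s).sub_const a
  refine ((((hs.const_mul 2).mul_const (u ⬝ᵥ w)).const_add (u ⬝ᵥ u)).add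
    ((hs.pow 2).mul_const (w ⬝ᵥ w))).congr_deriv ?_
  simp only [add_dotProduct, smul_dotProduct, smul_eq_mul]
  ring

variable {γ : ℝ → n → ℝ} {w : n → ℝ} {a b : ℝ}

lemma dotProduct_self_le_exp_of_affine {c : ℝ}
    (hγ : ∀ s ∈ Icc a b, γ s = γ a + (s - a) • w)
    (hdec : ∀ s ∈ Ico a b, 2 * (γ s ⬝ᵥ w) ≤ -c * (γ s ⬝ᵥ γ s)) :
    ∀ t ∈ Icc a b, γ t ⬝ᵥ γ t ≤ exp (-(c * (t - a))) * (γ a ⬝ᵥ γ a) := by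
  intro t ht
  have hderiv := hasDerivAt_affine_dotProduct_self (γ a) w a
  have := le_gronwallBound_of_liminf_deriv_right_le (ε := 0) (δ := γ a ⬝ᵥ γ a) (K := -c)
    (fun s _ => (hderiv s).continuousAt.continuousWithinAt)
    (fun s _ r hr => (hderiv s).hasDerivWithinAt.liminf_right_slope_le hr) (by simp)
    (fun s hs => by rw [← hγ s (Ico_subset_Icc_self hs), add_zero]; exact hdec s hs) t ht
  rwa [← hγ t ht, gronwallBound_ε0, mul_comm, neg_mul] at this

lemma dotProduct_self_le_of_affine {R : ℝ}
    (hγ : ∀ s ∈ Icc a b, γ s = γ a + (s - a) • w) (ha : γ a ⬝ᵥ γ a ≤ R)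
    (hdec : ∀ s ∈ Ico a b, γ s ⬝ᵥ γ s = R → γ s ⬝ᵥ w < 0) :
    ∀ t ∈ Icc a b, γ t ⬝ᵥ γ t ≤ R := by
  intro t ht
  have hderiv := hasDerivAt_affine_dotProduct_self (γ a) w a
  have := image_le_of_deriv_right_lt_deriv_boundary (B := fun _ => R) (B' := fun _ => 0)
    (fun s _ => (hderiv s).continuousAt.continuousWithinAt)
    (fun s _ => (hderiv s).hasDerivWithinAt) (by simpa using ha) (fun _ => hasDerivAt_const _ R)
    (fun s hs hR => by
      rw [← hγ s (Ico_subset_Icc_self hs)] at hR ⊢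
      linarith [hdec s hs hR]) ht
  rwa [← hγ t ht] at this

end AffineCurve

section HybridArc

variable {α : Type*} {τ : ℕ → ℝ} {z : ℕ → ℝ → α}

lemma hybridArc_eq_of_mem_Icc (hτ : Monotone τ)
    (hz : ∀ j, z (j + 1) (τ (j + 1)) = z j (τ (j + 1))) {j k : ℕ} (hjk : j ≤ k) {t : ℝ}
    (hj : t ∈ Icc (τ j) (τ (j + 1))) (hk : t ∈ Icc (τ k) (τ (k + 1))) : z j t = z k t := by
  induction k, hjk using Nat.le_induction with
  | base => rfl
  | succ k hjk ih =>
    have ht : t = τ (k + 1) := le_antisymm (hj.2.trans (hτ (Nat.succ_le_succ hjk))) hk.1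
    subst ht
    rw [ih ⟨hτ k.le_succ, le_rfl⟩, hz]

lemma hybridArc_forall_of_flow_invariant (hτ : Monotone τ)
    (hz : ∀ j, z (j + 1) (τ (j + 1)) = z j (τ (j + 1))) {P : α → Prop}
    (hP : ∀ j, ∀ a ∈ Icc (τ j) (τ (j + 1)), P (z j a) → ∀ t ∈ Icc a (τ (j + 1)), P (z j t))
    {j₀ : ℕ} {s₀ : ℝ} (hs₀ : s₀ ∈ Icc (τ j₀) (τ (j₀ + 1))) (h₀ : P (z j₀ s₀)) :
    ∀ j, ∀ t ∈ Icc (τ j) (τ (j + 1)), s₀ ≤ t → P (z j t) := by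
  intro j
  rcases lt_or_ge j j₀ with hj | hj
  · -- an earlier interval can reach time `s₀` only if all intervals in between are degenerate
    intro t ht hst
    have hts : t = s₀ := le_antisymm (ht.2.trans ((hτ hj).trans hs₀.1)) hst
    subst hts
    rwa [hybridArc_eq_of_mem_Icc hτ hz hj.le ht hs₀]
  induction j, hj using Nat.le_induction with
  | base => exact fun t ht hst => hP j₀ s₀ hs₀ h₀ t ⟨hst, ht.2⟩
  | succ j hj ih =>
    have hjump : P (z (j + 1) (τ (j + 1))) := by
      rw [hz]
      exact ih _ ⟨hτ j.le_succ, le_rfl⟩ (hs₀.2.trans (hτ (Nat.succ_le_succ hj)))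
    exact fun t ht _ => hP (j + 1) _ ⟨le_rfl, hτ (j + 1).le_succ⟩ hjump t ht

lemma hybridArc_le_exp_mul (hτ : Monotone τ) (hτ0 : τ 0 = 0)
    (hz : ∀ j, z (j + 1) (τ (j + 1)) = z j (τ (j + 1))) {V : α → ℝ} {G : α → Prop} {c : ℝ}
    (hV : ∀ j, ∀ t ∈ Icc (τ j) (τ (j + 1)), (∀ s ∈ Icc (τ j) t, G (z j s)) →
      V (z j t) ≤ exp (-(c * (t - τ j))) * V (z j (τ j))) :
    ∀ j, ∀ t ∈ Icc (τ j) (τ (j + 1)),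
      (∀ j' s, s ∈ Icc (τ j') (τ (j' + 1)) → s ≤ t → G (z j' s)) →
      V (z j t) ≤ exp (-(c * t)) * V (z 0 0) := by
  intro j
  induction j with
  | zero =>
    intro t ht hG
    simpa [hτ0] using hV 0 t ht fun s hs => hG 0 s ⟨hs.1, hs.2.trans ht.2⟩ hs.2
  | succ j ih =>
    intro t ht hG
    have hprev := ih (τ (j + 1)) ⟨hτ j.le_succ, le_rfl⟩
      fun j' s hs hst => hG j' s hs (hst.trans ht.1)
    calc V (z (j + 1) t)
        ≤ exp (-(c * (t - τ (j + 1)))) * V (z j (τ (j + 1))) := by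
          rw [← hz]
          exact hV (j + 1) t ht fun s hs => hG (j + 1) s ⟨hs.1, hs.2.trans ht.2⟩ hs.2
      _ ≤ exp (-(c * (t - τ (j + 1)))) * (exp (-(c * τ (j + 1))) * V (z 0 0)) := by gcongr
      _ = exp (-(c * t)) * V (z 0 0) := by rw [← mul_assoc, ← exp_add]; ring_nf

end HybridArc

section PracticalStability

variable {N : ℕ} {τ : ℕ → ℝ} {z : ℕ → ℝ → Fin N → ℝ} {w : ℕ → Fin N → ℝ} {B k : ℝ}

lemma eq_add_smul_of_flow
    (hflow : ∀ j, ∀ s ∈ Icc (τ j) (τ (j + 1)), z j s = z j (τ j) + (s - τ j) • w j)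
    {j : ℕ} {a : ℝ} (ha : a ∈ Icc (τ j) (τ (j + 1))) :
    ∀ s ∈ Icc a (τ (j + 1)), z j s = z j a + (s - a) • w j := by
  intro s hs
  rw [hflow j s ⟨ha.1.trans hs.1, hs.2⟩, hflow j a ha, add_assoc, ← add_smul]
  ring_nf

lemma sum_eq_of_hybridArc (hτ : Monotone τ) (hτ0 : τ 0 = 0)
    (hz : ∀ j, z (j + 1) (τ (j + 1)) = z j (τ (j + 1)))
    (hflow : ∀ j, ∀ s ∈ Icc (τ j) (τ (j + 1)), z j s = z j (τ j) + (s - τ j) • w j)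
    (hw : ∀ j, ∑ i, w j i = 0) :
    ∀ j, ∀ t ∈ Icc (τ j) (τ (j + 1)), ∑ i, z j t i = ∑ i, z 0 0 i := by
  intro j t ht
  refine hybridArc_forall_of_flow_invariant (P := fun v => ∑ i, v i = ∑ i, z 0 0 i) hτ hz
    (fun j a ha hP s hs => ?_) (j₀ := 0) ⟨hτ0.le, hτ0 ▸ hτ zero_le_one⟩ rfl j t ht
    (hτ0 ▸ (hτ j.zero_le).trans ht.1)
  simp [eq_add_smul_of_flow hflow ha s hs, Finset.sum_add_distrib, ← Finset.mul_sum, hw, hP]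

lemma sum_sq_le_exp_of_flow
    (hflow : ∀ j, ∀ s ∈ Icc (τ j) (τ (j + 1)), z j s = z j (τ j) + (s - τ j) • w j)
    (hdec : ∀ j, ∀ s ∈ Ico (τ j) (τ (j + 1)), B ≤ en (z j s) →
      z j s ⬝ᵥ w j ≤ -k * (z j s ⬝ᵥ z j s)) :
    ∀ j, ∀ t ∈ Icc (τ j) (τ (j + 1)), (∀ s ∈ Icc (τ j) t, B < en (z j s)) →
      (1 / 2) * ∑ i, z j t i ^ 2
        ≤ exp (-(2 * k * (t - τ j))) * ((1 / 2) * ∑ i, z j (τ j) i ^ 2) := by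
  intro j t ht hB
  have hτ : τ j ∈ Icc (τ j) (τ (j + 1)) := ⟨le_rfl, ht.1.trans ht.2⟩
  have := dotProduct_self_le_exp_of_affine (c := 2 * k)
    (fun s hs => eq_add_smul_of_flow hflow hτ s ⟨hs.1, hs.2.trans ht.2⟩)
    (fun s hs => by
      linarith [hdec j s ⟨hs.1, hs.2.trans_le ht.2⟩ (hB s (Ico_subset_Icc_self hs)).le])
    t ⟨ht.1, le_rfl⟩
  simp only [sum_sq_eq_dotProduct_self]
  linarith

lemma en_le_of_flow (hk : 0 < k) (hB : 0 < B)
    (hflow : ∀ j, ∀ s ∈ Icc (τ j) (τ (j + 1)), z j s = z j (τ j) + (s - τ j) • w j)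
    (hdec : ∀ j, ∀ s ∈ Ico (τ j) (τ (j + 1)), B ≤ en (z j s) →
      z j s ⬝ᵥ w j ≤ -k * (z j s ⬝ᵥ z j s)) :
    ∀ j, ∀ a ∈ Icc (τ j) (τ (j + 1)), en (z j a) ≤ B →
      ∀ t ∈ Icc a (τ (j + 1)), en (z j t) ≤ B := by
  intro j a ha hza t ht
  rw [en_le_iff_dotProduct_self_le hB.le] at hza ⊢
  refine dotProduct_self_le_of_affine (eq_add_smul_of_flow hflow ha) hza (fun s hs hR => ?_) t ht
  have hBs : B = en (z j s) := by rw [en_eq_sqrt_dotProduct_self, hR, Real.sqrt_sq hB.le]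
  have := hdec j s ⟨ha.1.trans hs.1, hs.2⟩ hBs.le
  rw [hR] at this
  linarith [mul_pos hk (pow_pos hB 2)]

lemma sum_sq_le_exp_of_hybridArc (hτ : Monotone τ) (hτ0 : τ 0 = 0)
    (hz : ∀ j, z (j + 1) (τ (j + 1)) = z j (τ (j + 1)))
    (hflow : ∀ j, ∀ s ∈ Icc (τ j) (τ (j + 1)), z j s = z j (τ j) + (s - τ j) • w j)
    (hdec : ∀ j, ∀ s ∈ Ico (τ j) (τ (j + 1)), B ≤ en (z j s) →
      z j s ⬝ᵥ w j ≤ -k * (z j s ⬝ᵥ z j s)) :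
    ∀ j, ∀ t ∈ Icc (τ j) (τ (j + 1)),
      (∀ j' s, s ∈ Icc (τ j') (τ (j' + 1)) → s ≤ t → B < en (z j' s)) →
      (1 / 2) * ∑ i, z j t i ^ 2 ≤ exp (-(2 * k * t)) * ((1 / 2) * ∑ i, z 0 0 i ^ 2) :=
  hybridArc_le_exp_mul (V := fun v => (1 / 2) * ∑ i, v i ^ 2) (G := fun v => B < en v)
    hτ hτ0 hz (sum_sq_le_exp_of_flow hflow hdec)

lemma exists_forall_en_le_of_hybridArc (hk : 0 < k) (hB : 0 < B) (hτ : Monotone τ)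
    (hτ0 : τ 0 = 0) (hz : ∀ j, z (j + 1) (τ (j + 1)) = z j (τ (j + 1)))
    (hflow : ∀ j, ∀ s ∈ Icc (τ j) (τ (j + 1)), z j s = z j (τ j) + (s - τ j) • w j)
    (hdec : ∀ j, ∀ s ∈ Ico (τ j) (τ (j + 1)), B ≤ en (z j s) →
      z j s ⬝ᵥ w j ≤ -k * (z j s ⬝ᵥ z j s)) :
    ∃ T, 0 ≤ T ∧ ∀ j, ∀ t ∈ Icc (τ j) (τ (j + 1)), T ≤ t → en (z j t) ≤ B := by
  by_cases hreach : ∃ j₀, ∃ s₀ ∈ Icc (τ j₀) (τ (j₀ + 1)), en (z j₀ s₀) ≤ B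
  · obtain ⟨j₀, s₀, hs₀, h₀⟩ := hreach
    exact ⟨s₀, hτ0 ▸ (hτ j₀.zero_le).trans hs₀.1, hybridArc_forall_of_flow_invariant
      (P := fun v => en v ≤ B) hτ hz (en_le_of_flow hk hB hflow hdec) hs₀ h₀⟩
  push Not at hreach
  have hlim : Filter.Tendsto (fun t => exp (-(2 * k * t)) * ((1 / 2) * ∑ i, z 0 0 i ^ 2))
      Filter.atTop (nhds 0) := by
    simpa using (tendsto_exp_neg_atTop_nhds_zero.comp
      (Filter.tendsto_id.const_mul_atTop (by positivity : 0 < 2 * k))).mul_const _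
  obtain ⟨T, hT⟩ := Filter.eventually_atTop.mp
    (hlim.eventually (gt_mem_nhds (by positivity : 0 < B ^ 2 / 2)))
  refine ⟨max T 0, le_max_right _ _, fun j t ht hTt => ?_⟩
  have hdecay := sum_sq_le_exp_of_hybridArc hτ hτ0 hz hflow hdec j t ht
    fun j' s hs _ => hreach j' s hs
  rw [sum_sq_eq_dotProduct_self, ← en_sq] at hdecay
  linarith [pow_lt_pow_left₀ (hreach j t ht) hB.le two_ne_zero, hT t (le_of_max_le_left hTt)]

end PracticalStability

theorem hybrid_practical_consensus_general (N : ℕ) (Δ : ℝ) (hΔ : 0 < Δ)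
    (A : Matrix (Fin N) (Fin N) ℝ)
    (hA : ∀ i j, 0 ≤ A i j)
    (hbal : ∀ i, ∑ j, A i j = ∑ j, A j i)
    (hconn : ∀ i j : Fin N,
      Relation.ReflTransGen (fun a b => A a b ≠ 0 ∨ A b a ≠ 0) i j)
    (L : Matrix (Fin N) (Fin N) ℝ)
    (hL : L = (Matrix.diagonal fun i => ∑ j, A i j) - A)
    (S : Matrix (Fin N) (Fin N) ℝ) (hS : S = (1 / 2 : ℝ) • (L + Lᵀ))
    (lam2 : ℝ)
    (hlam : IsLeast {μ : ℝ | μ ≠ 0 ∧ ∃ v : Fin N → ℝ, v ≠ 0 ∧ S.mulVec v = μ • v} lam2)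
    (CL : ℝ)
    (hCL : IsLeast {c : ℝ | 0 ≤ c ∧ ∀ v : Fin N → ℝ, en (L.mulVec v) ≤ c * en v} CL)
    (τ : ℕ → ℝ) (hτ0 : τ 0 = 0) (hτ : Monotone τ)
    (x : ℕ → ℝ → Fin N → ℝ) (q : ℕ → Fin N → ℝ)
    (hflow : ∀ j, ∀ s ∈ Set.Icc (τ j) (τ (j + 1)),
      x j s = x j (τ j) + (s - τ j) • (-(L.mulVec (q j))))
    (hC : ∀ j, ∀ s ∈ Set.Ico (τ j) (τ (j + 1)), ∀ i, |x j s i - q j i| < Δ / 2)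
    (hjumpx : ∀ j, x (j + 1) (τ (j + 1)) = x j (τ (j + 1)))
    (y : ℕ → ℝ → Fin N → ℝ)
    (hy : ∀ j s, y j s = fun i => x j s i - (∑ m, x j s m) / N) :
    ∀ ε : ℝ, 0 < ε → ε < 1 →
      ((∀ j, ∀ t ∈ Set.Icc (τ j) (τ (j + 1)),
        (∀ j' s, s ∈ Set.Icc (τ j') (τ (j' + 1)) → s ≤ t →
          1 / (1 - ε) * (CL / lam2) * (Δ / 2) * Real.sqrt N < en (y j' s)) →
        (1 / 2) * ∑ i, (y j t i) ^ 2
          ≤ Real.exp (-(2 * ε * lam2 * t)) * ((1 / 2) * ∑ i, (y 0 0 i) ^ 2)) ∧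
      (∃ T : ℝ, 0 ≤ T ∧ ∀ j, ∀ t ∈ Set.Icc (τ j) (τ (j + 1)), T ≤ t →
        en (fun i => x j t i - (∑ m, x 0 0 m) / N)
          ≤ 1 / (1 - ε) * (CL / lam2) * (Δ / 2) * Real.sqrt N)) := by
  intro ε hε0 hε1
  obtain rfl : L = laplacian A := hL
  obtain rfl : S = symmPart (laplacian A) := hS
  obtain ⟨⟨hlam_ne, v₀, hv₀, hv₀S⟩, hlam_le⟩ := hlam
  obtain ⟨⟨hCL0, hCL⟩, -⟩ := hCL
  obtain ⟨hlam_pos, hlam_CL⟩ := pos_and_le_of_mulVec_symmPart_eq_smul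
    (dotProduct_laplacian_mulVec_nonneg hA hbal) hCL hlam_ne hv₀ hv₀S
  have hsqrtN : 0 < √N := Real.sqrt_pos.mpr (Nat.cast_pos.mpr (Function.ne_iff.mp hv₀).choose.pos)
  have hB : 0 < 1 / (1 - ε) * (CL / lam2) * (Δ / 2) * √N := by
    have := sub_pos.mpr hε1
    have := hlam_pos.trans_le hlam_CL
    positivity
  have hy' : ∀ j s, y j s = disagreement (x j s) := hy
  have hw : ∀ j, ∑ i, (-(laplacian A *ᵥ q j)) i = 0 := fun j => by
    simp [sum_laplacian_mulVec hbal]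
  have hyflow : ∀ j, ∀ s ∈ Icc (τ j) (τ (j + 1)),
      y j s = y j (τ j) + (s - τ j) • -(laplacian A *ᵥ q j) := fun j s hs => by
    rw [hy', hy', hflow j s hs, disagreement_add_smul (hw j)]
  have hyjump : ∀ j, y (j + 1) (τ (j + 1)) = y j (τ (j + 1)) := fun j => by rw [hy', hy', hjumpx]
  have hdec : ∀ j, ∀ s ∈ Ico (τ j) (τ (j + 1)),
      1 / (1 - ε) * (CL / lam2) * (Δ / 2) * √N ≤ en (y j s) →
      y j s ⬝ᵥ -(laplacian A *ᵥ q j) ≤ -(ε * lam2) * (y j s ⬝ᵥ y j s) := fun j s hs hfar => by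
    rw [hy'] at hfar ⊢
    exact disagreement_dotProduct_neg_laplacian_mulVec_le hA hbal hconn hlam_le hlam_pos hε1
      hCL0 hCL (by positivity) (fun i => (hC j s hs i).le) hfar
  refine ⟨fun j t ht hfar => ?_, ?_⟩
  · simpa only [mul_assoc] using sum_sq_le_exp_of_hybridArc hτ hτ0 hyjump hyflow hdec j t ht hfar
  · obtain ⟨T, hT0, hT⟩ :=
      exists_forall_en_le_of_hybridArc (mul_pos hε0 hlam_pos) hB hτ hτ0 hyjump hyflow hdec
    refine ⟨T, hT0, fun j t ht hTt => ?_⟩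
    simpa [hy, sum_eq_of_hybridArc hτ hτ0 hjumpx hflow hw j t ht] using hT j t ht hTt

/-- finite-time practical consensus for the hybrid system with
hysteretic quantizers.  For any `ε ∈ (0,1)`: as long as the deviation
`y = (I − 𝟙𝟙ᵀ/N)x` has stayed above the threshold
`B = (1/(1−ε))·(‖L‖/λ₂(Sym L))·(Δ/2)·√N`, the Lyapunov function `V = ½‖y‖²`
decays as `V(t) ≤ e^{−2ελ₂(Sym L)t}·V(0)`; consequently there is `T(ε) ≥ 0`
such that `‖x(t,j) − (𝟙𝟙ᵀ/N)x(0,0)‖ ≤ B` for all domain times `t ≥ T(ε)`. -/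
theorem hybrid_practical_consensus (N : ℕ) (Δ : ℝ) (hΔ : 0 < Δ)
    (A : Matrix (Fin N) (Fin N) ℝ)
    (hA : ∀ i j, 0 ≤ A i j) (hdiag : ∀ i, A i i = 0)
    (hbal : ∀ i, ∑ j, A i j = ∑ j, A j i)
    (hconn : ∀ i j : Fin N,
      Relation.ReflTransGen (fun a b => A a b ≠ 0 ∨ A b a ≠ 0) i j)
    (L : Matrix (Fin N) (Fin N) ℝ)
    (hL : L = (Matrix.diagonal fun i => ∑ j, A i j) - A)
    (S : Matrix (Fin N) (Fin N) ℝ) (hS : S = (1 / 2 : ℝ) • (L + Lᵀ))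
    (lam2 : ℝ)
    (hlam : IsLeast {μ : ℝ | μ ≠ 0 ∧ ∃ v : Fin N → ℝ, v ≠ 0 ∧ S.mulVec v = μ • v} lam2)
    (CL : ℝ)
    (hCL : IsLeast {c : ℝ | 0 ≤ c ∧ ∀ v : Fin N → ℝ, en (L.mulVec v) ≤ c * en v} CL)
    (τ : ℕ → ℝ) (hτ0 : τ 0 = 0) (hτ : Monotone τ)
    (x : ℕ → ℝ → Fin N → ℝ) (q : ℕ → Fin N → ℝ)
    (hlat : ∀ j i, ∃ m : ℤ, q j i = m * (Δ / 2))
    (hflow : ∀ j, ∀ s ∈ Set.Icc (τ j) (τ (j + 1)),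
      x j s = x j (τ j) + (s - τ j) • (-(L.mulVec (q j))))
    (hC : ∀ j, ∀ s ∈ Set.Ico (τ j) (τ (j + 1)), ∀ i, |x j s i - q j i| < Δ / 2)
    (hjumpx : ∀ j, x (j + 1) (τ (j + 1)) = x j (τ (j + 1)))
    (hjumpq : ∀ j i, q (j + 1) i =
      if q j i + Δ / 2 ≤ x j (τ (j + 1)) i then q j i + Δ / 2
      else if x j (τ (j + 1)) i ≤ q j i - Δ / 2 then q j i - Δ / 2
      else q j i)
    (hX0 : ∀ i, q 0 i - Δ / 2 ≤ x 0 0 i ∧ x 0 0 i < q 0 i + Δ / 2)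
    (y : ℕ → ℝ → Fin N → ℝ)
    (hy : ∀ j s, y j s = fun i => x j s i - (∑ m, x j s m) / N) :
    ∀ ε : ℝ, 0 < ε → ε < 1 →
      ((∀ j, ∀ t ∈ Set.Icc (τ j) (τ (j + 1)),
        (∀ j' s, s ∈ Set.Icc (τ j') (τ (j' + 1)) → s ≤ t →
          1 / (1 - ε) * (CL / lam2) * (Δ / 2) * Real.sqrt N < en (y j' s)) →
        (1 / 2) * ∑ i, (y j t i) ^ 2
          ≤ Real.exp (-(2 * ε * lam2 * t)) * ((1 / 2) * ∑ i, (y 0 0 i) ^ 2)) ∧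
      (∃ T : ℝ, 0 ≤ T ∧ ∀ j, ∀ t ∈ Set.Icc (τ j) (τ (j + 1)), T ≤ t →
        en (fun i => x j t i - (∑ m, x 0 0 m) / N)
          ≤ 1 / (1 - ε) * (CL / lam2) * (Δ / 2) * Real.sqrt N)) :=
  hybrid_practical_consensus_general N Δ hΔ A hA hbal hconn L hL S hS lam2 hlam CL hCL τ hτ0 hτ x q
    hflow hC hjumpx y hy
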